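/- arXiv:1605.05634 — 5 statements merged into one kernel-verified Lean document; each statement's English description precedes it below -/
import Mathlib

section
/- The operators E, F, H, K on Ṽ_λ satisfy all defining relations of the unrolled restricted quantum group: K is invertible, KE = q²EK, KF = q^{−2}FK, HK = KH, HE − EH = 2E, HF − FH = −2F, EF − FE = (K − K^{−1})/(q − q^{−1}), and E^r = F^r = 0; moreover the span W of {v_i^1 : 0 ≤ i ≤ r−1} is invariant under E, F, H, K, so Ṽ_λ is a self-extension of the typical module V_λ. -/
/-- `q^z = exp(iπz/r)` for `q = exp(iπ/r)`. -/
noncomputable def qexp (r : ℕ) (z : ℂ) : ℂ := Complex.exp (Real.pi * Complex.I * z / r)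

/-- The quantum bracket `{z} = q^z - q^{-z}`. -/
noncomputable def qbr (r : ℕ) (z : ℂ) : ℂ := qexp r z - qexp r (-z)

/-- The quantum number `[z] = {z}/{1}`. -/
noncomputable def qnum (r : ℕ) (z : ℂ) : ℂ := qbr r z / qbr r 1

/-- `β_j = (iπ/r)·(1/(q−q⁻¹))·∑_{m=1}^{j}(q^{λ−2(m−1)} + q^{2(m−1)−λ})` (so `β_0 = 0`). -/
noncomputable def betaC (r : ℕ) (lam : ℂ) (j : ℕ) : ℂ :=
  ((Real.pi : ℂ) * Complex.I / r) * (1 / (qexp r 1 - qexp r (-1))) *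
    ∑ m ∈ Finset.range j, (qexp r (lam - 2 * (m : ℂ)) + qexp r (2 * (m : ℂ) - lam))

/-- `H` on `Ṽ_λ`: `H v_i^0 = (λ−2i)v_i^0 + v_i^1`, `H v_i^1 = (λ−2i)v_i^1`.
Basis vector `v_i^a` is indexed by `(a, i) : Fin 2 × Fin r`; the matrix entry at
row `p`, column `p'` is the coefficient of the basis vector `p` in the image of `p'`. -/
noncomputable def Ht (r : ℕ) (lam : ℂ) : Matrix (Fin 2 × Fin r) (Fin 2 × Fin r) ℂ :=
  Matrix.of fun p p' =>
    if p.2 = p'.2 then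
      if p.1 = p'.1 then lam - 2 * ((p'.2 : ℕ) : ℂ)
      else if p'.1 = 0 ∧ p.1 = 1 then 1 else 0
    else 0

/-- `K` on `Ṽ_λ`: `K v_i^0 = q^{λ−2i} v_i^0 + (iπ/r)q^{λ−2i} v_i^1`, `K v_i^1 = q^{λ−2i} v_i^1`. -/
noncomputable def Kt (r : ℕ) (lam : ℂ) : Matrix (Fin 2 × Fin r) (Fin 2 × Fin r) ℂ :=
  Matrix.of fun p p' =>
    if p.2 = p'.2 then
      if p.1 = p'.1 then qexp r (lam - 2 * ((p'.2 : ℕ) : ℂ))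
      else if p'.1 = 0 ∧ p.1 = 1 then
        ((Real.pi : ℂ) * Complex.I / r) * qexp r (lam - 2 * ((p'.2 : ℕ) : ℂ))
      else 0
    else 0

/-- `E` on `Ṽ_λ`: `E v_i^0 = [i][λ+1−i]v_{i−1}^0 + β_i v_{i−1}^1`,
`E v_i^1 = [i][λ+1−i]v_{i−1}^1`, `E v_0^0 = E v_0^1 = 0`. -/
noncomputable def Et (r : ℕ) (lam : ℂ) : Matrix (Fin 2 × Fin r) (Fin 2 × Fin r) ℂ :=
  Matrix.of fun p p' =>
    if (p.2 : ℕ) + 1 = (p'.2 : ℕ) then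
      if p.1 = p'.1 then qnum r ((p'.2 : ℕ) : ℂ) * qnum r (lam + 1 - ((p'.2 : ℕ) : ℂ))
      else if p'.1 = 0 ∧ p.1 = 1 then betaC r lam (p'.2 : ℕ) else 0
    else 0

/-- `F` on `Ṽ_λ`: `F v_i^a = v_{i+1}^a`, `F v_{r−1}^a = 0`. -/
noncomputable def Ft (r : ℕ) : Matrix (Fin 2 × Fin r) (Fin 2 × Fin r) ℂ :=
  Matrix.of fun p p' => if p.1 = p'.1 ∧ (p.2 : ℕ) = (p'.2 : ℕ) + 1 then 1 else 0


namespace Stmt4Aux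
open Complex Matrix Kronecker

noncomputable def fE (r : ℕ) (lam : ℂ) (k : ℕ) : ℂ := qnum r k * qnum r (lam + 1 - k)

lemma qexp_def (r : ℕ) (z : ℂ) : qexp r z = Complex.exp ((Real.pi * Complex.I / r) * z) := by
  rw [qexp]; ring_nf

lemma qexp_add (r : ℕ) (z w : ℂ) : qexp r (z + w) = qexp r z * qexp r w := by
  simp only [qexp_def, mul_add, Complex.exp_add]

lemma qexp_ne_zero (r : ℕ) (z : ℂ) : qexp r z ≠ 0 := Complex.exp_ne_zero _

lemma qexp_mul_neg (r : ℕ) (z : ℂ) : qexp r z * qexp r (-z) = 1 := by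
  rw [← qexp_add]; simp [qexp]

lemma qexp_neg (r : ℕ) (z : ℂ) : qexp r (-z) = (qexp r z)⁻¹ :=
  eq_inv_of_mul_eq_one_left (by rw [mul_comm]; exact qexp_mul_neg r z)

lemma qexp_nat_mul (r n : ℕ) (z : ℂ) : qexp r ((n : ℂ) * z) = qexp r z ^ n := by
  simp only [qexp_def]
  rw [show (Real.pi * Complex.I / r) * ((n:ℂ) * z) = (n:ℂ) * ((Real.pi * Complex.I / r) * z) by
    ring, Complex.exp_nat_mul]

lemma qexp_two_ne_one (r : ℕ) (hr : 2 ≤ r) : qexp r 2 ≠ 1 := by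
  intro h
  rw [qexp, Complex.exp_eq_one_iff] at h
  obtain ⟨n, hn⟩ := h
  have hr0 : (r : ℂ) ≠ 0 := Nat.cast_ne_zero.mpr (by omega)
  have hpi : (Real.pi : ℂ) ≠ 0 := Complex.ofReal_ne_zero.mpr Real.pi_ne_zero
  field_simp at hn
  have h2 : (2 * (Real.pi:ℂ) * I) * 1 = (2 * Real.pi * I) * ((n:ℂ) * r) := by linear_combination (2 * (Real.pi:ℂ) * I) * hn
  have h1 : (1 : ℂ) = ((n * r : ℤ) : ℂ) := by
    push_cast
    exact mul_left_cancel₀ (by simp [hpi, Complex.I_ne_zero]) h2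
  have h3 : (1 : ℤ) = n * r := by exact_mod_cast h1
  have h4 : (r : ℤ) ∣ 1 := ⟨n, by linarith⟩
  have := Int.le_of_dvd one_pos h4
  omega

lemma qexp_neg_two_ne_one (r : ℕ) (hr : 2 ≤ r) : qexp r (-2) ≠ 1 := by
  intro h
  apply qexp_two_ne_one r hr
  have := qexp_mul_neg r 2
  rw [h, mul_one] at this
  exact this

lemma qbr_one_ne_zero (r : ℕ) (hr : 2 ≤ r) : qexp r 1 - qexp r (-1) ≠ 0 := by
  intro h
  apply qexp_two_ne_one r hr
  have h1 : qexp r 1 * qexp r 1 = qexp r 1 * qexp r (-1) := by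
    rw [sub_eq_zero] at h; rw [← h]
  rw [qexp_mul_neg, ← qexp_add] at h1
  norm_num at h1
  exact h1

lemma qexp_two_pow_r (r : ℕ) (hr : 2 ≤ r) : qexp r 2 ^ r = 1 := by
  rw [← qexp_nat_mul, qexp]
  have hr0 : (r : ℂ) ≠ 0 := Nat.cast_ne_zero.mpr (by omega)
  rw [show (Real.pi:ℂ) * I * ((r:ℂ) * 2) / r = 2 * Real.pi * I by field_simp]
  exact Complex.exp_two_pi_mul_I

lemma qexp_neg_two_pow_r (r : ℕ) (hr : 2 ≤ r) : qexp r (-2) ^ r = 1 := by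
  have h1 : (qexp r 2 * qexp r (-2)) ^ r = 1 := by rw [qexp_mul_neg]; exact one_pow r
  rw [mul_pow, qexp_two_pow_r r hr, one_mul] at h1
  exact h1

/-- The geometric-sum vanishing: `∑_{m<r} (q^{λ-2m} + q^{2m-λ}) = 0`. -/
lemma sum_qexp_eq_zero (r : ℕ) (hr : 2 ≤ r) (lam : ℂ) :
    ∑ m ∈ Finset.range r, (qexp r (lam - 2 * (m : ℂ)) + qexp r (2 * (m : ℂ) - lam)) = 0 := by
  have h1 : ∀ m : ℕ, qexp r (lam - 2 * (m : ℂ)) = qexp r lam * qexp r (-2) ^ m := by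
    intro m
    rw [← qexp_nat_mul, ← qexp_add]
    congr 1; ring
  have h2 : ∀ m : ℕ, qexp r (2 * (m : ℂ) - lam) = qexp r (-lam) * qexp r 2 ^ m := by
    intro m
    rw [← qexp_nat_mul, ← qexp_add]
    congr 1; ring
  simp only [h1, h2]
  rw [Finset.sum_add_distrib, ← Finset.mul_sum, ← Finset.mul_sum,
    geom_sum_eq (qexp_neg_two_ne_one r hr), geom_sum_eq (qexp_two_ne_one r hr),
    qexp_neg_two_pow_r r hr, qexp_two_pow_r r hr]
  simp

lemma betaC_zero (r : ℕ) (lam : ℂ) : betaC r lam 0 = 0 := by simp [betaC]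

lemma betaC_r (r : ℕ) (hr : 2 ≤ r) (lam : ℂ) : betaC r lam r = 0 := by
  rw [betaC, sum_qexp_eq_zero r hr lam, mul_zero]

lemma betaC_succ_sub (r : ℕ) (lam : ℂ) (i : ℕ) :
    betaC r lam (i+1) - betaC r lam i
      = ((qexp r 1 - qexp r (-1))⁻¹ * ((Real.pi : ℂ) * Complex.I / r)) *
        (qexp r (lam - 2*(i:ℂ)) + qexp r (2*(i:ℂ) - lam)) := by
  rw [betaC, betaC, Finset.sum_range_succ]
  ring

lemma key1br (r : ℕ) (lam z : ℂ) :
    qbr r (z+1) * qbr r (lam - z) - qbr r z * qbr r (lam + 1 - z)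
      = qbr r 1 * (qexp r (lam - 2*z) - qexp r (2*z - lam)) := by
  simp only [qbr, qexp_def]
  generalize (Real.pi * Complex.I / r : ℂ) = t
  have e2 : ∀ w : ℂ, Complex.exp (t * (2*w)) = Complex.exp (t*w) ^ 2 := by
    intro w
    rw [show t*(2*w) = ((2:ℕ):ℂ) * (t*w) by push_cast; ring, Complex.exp_nat_mul]
  simp only [mul_sub, mul_add, mul_neg, mul_one, Complex.exp_sub, Complex.exp_add,
    Complex.exp_neg, e2, inv_inv, inv_div, mul_inv]
  ring

lemma key1 (r : ℕ) (hr : 2 ≤ r) (lam : ℂ) (i : ℕ) :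
    fE r lam (i+1) - fE r lam i
      = (qexp r 1 - qexp r (-1))⁻¹ * (qexp r (lam - 2*(i:ℂ)) - qexp r (2*(i:ℂ) - lam)) := by
  have hbr := qbr_one_ne_zero r hr
  have h := key1br r lam (i:ℂ)
  have h1 : qbr r 1 ≠ 0 := hbr
  unfold fE qnum
  push_cast
  rw [show lam + 1 - ((i:ℂ)+1) = lam - i by ring]
  rw [div_mul_div_comm, div_mul_div_comm, div_sub_div_same, h,
    mul_div_mul_left _ _ h1, div_eq_inv_mul]
  rfl

lemma fE_zero (r : ℕ) (lam : ℂ) : fE r lam 0 = 0 := by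
  simp [fE, qnum, qbr, qexp_def]

lemma fE_r (r : ℕ) (hr : 2 ≤ r) (lam : ℂ) : fE r lam r = 0 := by
  have h1 : qexp r (r : ℂ) = -1 := by
    rw [qexp]
    have hr0 : (r : ℂ) ≠ 0 := Nat.cast_ne_zero.mpr (by omega)
    rw [show (Real.pi:ℂ) * I * (r:ℂ) / r = Real.pi * I by field_simp]
    exact Complex.exp_pi_mul_I
  have h2 : qbr r (r : ℂ) = 0 := by
    rw [qbr, qexp_neg, h1]
    norm_num
  rw [fE, qnum, h2, zero_div, zero_mul]


noncomputable def cc (r : ℕ) : ℂ := (Real.pi : ℂ) * Complex.I / r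

noncomputable def Qm (r : ℕ) (lam : ℂ) : Matrix (Fin r) (Fin r) ℂ :=
  Matrix.diagonal fun i => qexp r (lam - 2*((i:ℕ):ℂ))
noncomputable def Qi (r : ℕ) (lam : ℂ) : Matrix (Fin r) (Fin r) ℂ :=
  Matrix.diagonal fun i => qexp r (2*((i:ℕ):ℂ) - lam)
noncomputable def Dm (r : ℕ) (lam : ℂ) : Matrix (Fin r) (Fin r) ℂ :=
  Matrix.diagonal fun i => lam - 2*((i:ℕ):ℂ)
noncomputable def E0 (r : ℕ) (lam : ℂ) : Matrix (Fin r) (Fin r) ℂ :=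
  Matrix.of fun i j => if (i:ℕ)+1 = (j:ℕ) then fE r lam (j:ℕ) else 0
noncomputable def E1 (r : ℕ) (lam : ℂ) : Matrix (Fin r) (Fin r) ℂ :=
  Matrix.of fun i j => if (i:ℕ)+1 = (j:ℕ) then betaC r lam (j:ℕ) else 0
noncomputable def F0 (r : ℕ) : Matrix (Fin r) (Fin r) ℂ :=
  Matrix.of fun i j => if (i:ℕ) = (j:ℕ)+1 then (1:ℂ) else 0
def N2 : Matrix (Fin 2) (Fin 2) ℂ := Matrix.of fun a b => if b = 0 ∧ a = 1 then 1 else 0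

lemma val_mk {n a : ℕ} (h : a < n) : ((⟨a, h⟩ : Fin n) : ℕ) = a := rfl

lemma N2_sq : N2 * N2 = 0 := by
  ext a b
  fin_cases a <;> fin_cases b <;>
    simp [N2, Matrix.mul_apply, Fin.sum_univ_two]

lemma E0_eq (r : ℕ) (lam : ℂ) {i j : Fin r} {k : ℕ} (hjk : (j:ℕ) = k) (h : (i:ℕ)+1 = k) :
    E0 r lam i j = fE r lam k := by
  subst hjk
  show (if (i:ℕ)+1 = (j:ℕ) then fE r lam (j:ℕ) else 0) = fE r lam (j:ℕ)
  rw [if_pos h]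

lemma E0_ne (r : ℕ) (lam : ℂ) {i j : Fin r} (h : ¬((i:ℕ)+1 = (j:ℕ))) : E0 r lam i j = 0 := by
  show (if (i:ℕ)+1 = (j:ℕ) then fE r lam (j:ℕ) else 0) = 0
  rw [if_neg h]

lemma E1_eq (r : ℕ) (lam : ℂ) {i j : Fin r} {k : ℕ} (hjk : (j:ℕ) = k) (h : (i:ℕ)+1 = k) :
    E1 r lam i j = betaC r lam k := by
  subst hjk
  show (if (i:ℕ)+1 = (j:ℕ) then betaC r lam (j:ℕ) else 0) = betaC r lam (j:ℕ)
  rw [if_pos h]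

lemma E1_ne (r : ℕ) (lam : ℂ) {i j : Fin r} (h : ¬((i:ℕ)+1 = (j:ℕ))) : E1 r lam i j = 0 := by
  show (if (i:ℕ)+1 = (j:ℕ) then betaC r lam (j:ℕ) else 0) = 0
  rw [if_neg h]

lemma mul_F0_apply (r : ℕ) (M : Matrix (Fin r) (Fin r) ℂ) (i j : Fin r) :
    (M * F0 r) i j = if h : (j:ℕ)+1 < r then M i ⟨(j:ℕ)+1, h⟩ else 0 := by
  rw [Matrix.mul_apply]
  split_ifs with h
  · rw [Finset.sum_eq_single (⟨(j:ℕ)+1, h⟩ : Fin r)]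
    · have h1 : F0 r ⟨(j:ℕ)+1, h⟩ j = 1 := by
        show (if (j:ℕ)+1 = (j:ℕ)+1 then (1:ℂ) else 0) = 1
        rw [if_pos rfl]
      rw [h1, mul_one]
    · intro k _ hk
      have hne : ¬((k:ℕ) = (j:ℕ)+1) := fun hc => hk (Fin.ext (show (k:ℕ) = (j:ℕ)+1 from hc))
      simp [F0, hne]
    · simp
  · apply Finset.sum_eq_zero
    intro k _
    have : ¬((k:ℕ) = (j:ℕ)+1) := by omega
    simp [F0, this]

lemma F0_mul_apply (r : ℕ) (M : Matrix (Fin r) (Fin r) ℂ) (i j : Fin r) :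
    (F0 r * M) i j = if h : 0 < (i:ℕ) then M ⟨(i:ℕ)-1, by omega⟩ j else 0 := by
  rw [Matrix.mul_apply]
  split_ifs with h
  · rw [Finset.sum_eq_single (⟨(i:ℕ)-1, by omega⟩ : Fin r)]
    · have h1 : F0 r i ⟨(i:ℕ)-1, by omega⟩ = 1 := by
        show (if (i:ℕ) = ((i:ℕ)-1)+1 then (1:ℂ) else 0) = 1
        rw [if_pos (by omega)]
      rw [h1, one_mul]
    · intro k _ hk
      have hne : ¬((i:ℕ) = (k:ℕ)+1) := by
        intro hc
        exact hk (Fin.ext (show (k:ℕ) = (i:ℕ)-1 by omega))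
      simp [F0, hne]
    · simp
  · apply Finset.sum_eq_zero
    intro k _
    have : ¬((i:ℕ) = (k:ℕ)+1) := by omega
    simp [F0, this]

lemma cQE0 (r : ℕ) (lam : ℂ) : Qm r lam * E0 r lam = qexp r 2 • (E0 r lam * Qm r lam) := by
  ext i j
  rw [Matrix.smul_apply, Qm, Matrix.diagonal_mul, Matrix.mul_diagonal]
  simp only [E0, Matrix.of_apply]
  split_ifs with h
  · have hc : ((j:ℕ):ℂ) = ((i:ℕ):ℂ) + 1 := by exact_mod_cast congrArg (Nat.cast : ℕ → ℂ) h.symm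
    rw [hc, show lam - 2*((i:ℕ):ℂ) = 2 + (lam - 2*(((i:ℕ):ℂ)+1)) by ring, qexp_add, smul_eq_mul]
    ring
  · simp

lemma cQE1 (r : ℕ) (lam : ℂ) : Qm r lam * E1 r lam = qexp r 2 • (E1 r lam * Qm r lam) := by
  ext i j
  rw [Matrix.smul_apply, Qm, Matrix.diagonal_mul, Matrix.mul_diagonal]
  simp only [E1, Matrix.of_apply]
  split_ifs with h
  · have hc : ((j:ℕ):ℂ) = ((i:ℕ):ℂ) + 1 := by exact_mod_cast congrArg (Nat.cast : ℕ → ℂ) h.symm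
    rw [hc, show lam - 2*((i:ℕ):ℂ) = 2 + (lam - 2*(((i:ℕ):ℂ)+1)) by ring, qexp_add, smul_eq_mul]
    ring
  · simp

lemma cQF0 (r : ℕ) (lam : ℂ) : Qm r lam * F0 r = qexp r (-2) • (F0 r * Qm r lam) := by
  ext i j
  rw [Matrix.smul_apply, Qm, Matrix.diagonal_mul, Matrix.mul_diagonal]
  simp only [F0, Matrix.of_apply]
  split_ifs with h
  · have hc : ((i:ℕ):ℂ) = ((j:ℕ):ℂ) + 1 := by exact_mod_cast congrArg (Nat.cast : ℕ → ℂ) h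
    rw [hc, show lam - 2*(((j:ℕ):ℂ)+1) = -2 + (lam - 2*((j:ℕ):ℂ)) by ring, qexp_add, smul_eq_mul]
    ring
  · simp

lemma cDQ (r : ℕ) (lam : ℂ) : Dm r lam * Qm r lam = Qm r lam * Dm r lam := by
  ext i j
  rw [Dm, Qm, Matrix.diagonal_mul, Matrix.mul_diagonal, Matrix.diagonal_apply]
  split_ifs with h
  · subst h; ring
  · ring

lemma cDE0 (r : ℕ) (lam : ℂ) : Dm r lam * E0 r lam = E0 r lam * Dm r lam + (2:ℂ) • E0 r lam := by
  ext i j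
  rw [Matrix.add_apply, Matrix.smul_apply, Dm, Matrix.diagonal_mul, Matrix.mul_diagonal]
  simp only [E0, Matrix.of_apply]
  split_ifs with h
  · have hc : ((j:ℕ):ℂ) = ((i:ℕ):ℂ) + 1 := by exact_mod_cast congrArg (Nat.cast : ℕ → ℂ) h.symm
    rw [hc, smul_eq_mul]; ring
  · simp

lemma cDE1 (r : ℕ) (lam : ℂ) : Dm r lam * E1 r lam = E1 r lam * Dm r lam + (2:ℂ) • E1 r lam := by
  ext i j
  rw [Matrix.add_apply, Matrix.smul_apply, Dm, Matrix.diagonal_mul, Matrix.mul_diagonal]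
  simp only [E1, Matrix.of_apply]
  split_ifs with h
  · have hc : ((j:ℕ):ℂ) = ((i:ℕ):ℂ) + 1 := by exact_mod_cast congrArg (Nat.cast : ℕ → ℂ) h.symm
    rw [hc, smul_eq_mul]; ring
  · simp

lemma cDF0 (r : ℕ) (lam : ℂ) : Dm r lam * F0 r = F0 r * Dm r lam + (-2:ℂ) • F0 r := by
  ext i j
  rw [Matrix.add_apply, Matrix.smul_apply, Dm, Matrix.diagonal_mul, Matrix.mul_diagonal]
  simp only [F0, Matrix.of_apply]
  split_ifs with h
  · have hc : ((i:ℕ):ℂ) = ((j:ℕ):ℂ) + 1 := by exact_mod_cast congrArg (Nat.cast : ℕ → ℂ) h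
    rw [hc, smul_eq_mul]; ring
  · simp

lemma cQQi (r : ℕ) (lam : ℂ) : Qm r lam * Qi r lam = 1 := by
  ext i j
  rw [Qm, Qi, Matrix.diagonal_mul, Matrix.diagonal_apply, Matrix.one_apply]
  split_ifs with h
  · rw [show 2*((i:ℕ):ℂ) - lam = -(lam - 2*((i:ℕ):ℂ)) by ring, qexp_mul_neg r _]
  · ring

lemma cQiQ (r : ℕ) (lam : ℂ) : Qi r lam * Qm r lam = 1 := by
  rw [mul_eq_one_comm]; exact cQQi r lam

lemma cEF0 (r : ℕ) (hr : 2 ≤ r) (lam : ℂ) :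
    E0 r lam * F0 r = F0 r * E0 r lam
      + (qexp r 1 - qexp r (-1))⁻¹ • (Qm r lam - Qi r lam) := by
  ext i j
  rw [mul_F0_apply, Matrix.add_apply, F0_mul_apply, Matrix.smul_apply, Matrix.sub_apply]
  by_cases hij : i = j
  · subst hij
    rw [Qm, Qi, Matrix.diagonal_apply_eq, Matrix.diagonal_apply_eq, smul_eq_mul]
    by_cases h1 : (i:ℕ)+1 < r <;> by_cases h2 : 0 < (i:ℕ)
    · rw [dif_pos h1, dif_pos h2, E0_eq r lam (k := (i:ℕ)+1) rfl rfl,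
        E0_eq r lam (k := (i:ℕ)) rfl (show ((i:ℕ)-1)+1 = (i:ℕ) by omega)]
      linear_combination key1 r hr lam (i:ℕ)
    · rw [dif_pos h1, dif_neg h2, E0_eq r lam (k := (i:ℕ)+1) rfl rfl]
      have h0 : (i:ℕ) = 0 := by omega
      rw [h0]
      have hk := key1 r hr lam 0
      rw [fE_zero] at hk
      linear_combination hk
    · rw [dif_neg h1, dif_pos h2, E0_eq r lam (k := (i:ℕ)) rfl (show ((i:ℕ)-1)+1 = (i:ℕ) by omega)]
      have hk := key1 r hr lam (i:ℕ)
      rw [show (i:ℕ)+1 = r by omega, fE_r r hr lam] at hk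
      linear_combination hk
    · omega
  · have hne : (i:ℕ) ≠ (j:ℕ) := fun hc => hij (Fin.ext hc)
    rw [Qm, Qi, Matrix.diagonal_apply_ne _ hij, Matrix.diagonal_apply_ne _ hij]
    have e1 : (if h : (j:ℕ)+1 < r then E0 r lam i ⟨(j:ℕ)+1, h⟩ else 0) = 0 := by
      split_ifs with h
      · exact E0_ne r lam (show ¬((i:ℕ)+1 = (j:ℕ)+1) by omega)
      · rfl
    have e2 : (if h : 0 < (i:ℕ) then E0 r lam ⟨(i:ℕ)-1, by omega⟩ j else 0) = 0 := by
      split_ifs with h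
      · exact E0_ne r lam (show ¬(((i:ℕ)-1)+1 = (j:ℕ)) by omega)
      · rfl
    rw [e1, e2]
    simp

lemma cEF1 (r : ℕ) (hr : 2 ≤ r) (lam : ℂ) :
    E1 r lam * F0 r = F0 r * E1 r lam
      + ((qexp r 1 - qexp r (-1))⁻¹ * cc r) • (Qm r lam + Qi r lam) := by
  ext i j
  rw [mul_F0_apply, Matrix.add_apply, F0_mul_apply, Matrix.smul_apply, Matrix.add_apply]
  by_cases hij : i = j
  · subst hij
    rw [Qm, Qi, Matrix.diagonal_apply_eq, Matrix.diagonal_apply_eq, smul_eq_mul, cc]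
    by_cases h1 : (i:ℕ)+1 < r <;> by_cases h2 : 0 < (i:ℕ)
    · rw [dif_pos h1, dif_pos h2, E1_eq r lam (k := (i:ℕ)+1) rfl rfl,
        E1_eq r lam (k := (i:ℕ)) rfl (show ((i:ℕ)-1)+1 = (i:ℕ) by omega)]
      linear_combination betaC_succ_sub r lam (i:ℕ)
    · rw [dif_pos h1, dif_neg h2, E1_eq r lam (k := (i:ℕ)+1) rfl rfl]
      have h0 : (i:ℕ) = 0 := by omega
      rw [h0]
      have hk := betaC_succ_sub r lam 0
      rw [betaC_zero] at hk
      linear_combination hk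
    · rw [dif_neg h1, dif_pos h2, E1_eq r lam (k := (i:ℕ)) rfl (show ((i:ℕ)-1)+1 = (i:ℕ) by omega)]
      have hk := betaC_succ_sub r lam (i:ℕ)
      rw [show (i:ℕ)+1 = r by omega, betaC_r r hr lam] at hk
      linear_combination hk
    · omega
  · have hne : (i:ℕ) ≠ (j:ℕ) := fun hc => hij (Fin.ext hc)
    rw [Qm, Qi, Matrix.diagonal_apply_ne _ hij, Matrix.diagonal_apply_ne _ hij]
    have e1 : (if h : (j:ℕ)+1 < r then E1 r lam i ⟨(j:ℕ)+1, h⟩ else 0) = 0 := by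
      split_ifs with h
      · exact E1_ne r lam (show ¬((i:ℕ)+1 = (j:ℕ)+1) by omega)
      · rfl
    have e2 : (if h : 0 < (i:ℕ) then E1 r lam ⟨(i:ℕ)-1, by omega⟩ j else 0) = 0 := by
      split_ifs with h
      · exact E1_ne r lam (show ¬(((i:ℕ)-1)+1 = (j:ℕ)) by omega)
      · rfl
    rw [e1, e2]
    simp


lemma kron_sub {m n : Type*} (A : Matrix m m ℂ) (X Y : Matrix n n ℂ) :
    A ⊗ₖ (X - Y) = A ⊗ₖ X - A ⊗ₖ Y := by
  ext ⟨a, i⟩ ⟨b, j⟩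
  simp [Matrix.kroneckerMap_apply, Matrix.sub_apply, mul_sub]

lemma sub_kron {m n : Type*} (A B : Matrix m m ℂ) (X : Matrix n n ℂ) :
    (A - B) ⊗ₖ X = A ⊗ₖ X - B ⊗ₖ X := by
  ext ⟨a, i⟩ ⟨b, j⟩
  simp [Matrix.kroneckerMap_apply, Matrix.sub_apply, sub_mul]

lemma Ht_dec (r : ℕ) (lam : ℂ) :
    Ht r lam = (1 : Matrix (Fin 2) (Fin 2) ℂ) ⊗ₖ Dm r lam
      + N2 ⊗ₖ (1 : Matrix (Fin r) (Fin r) ℂ) := by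
  ext ⟨a, i⟩ ⟨b, j⟩
  by_cases h : i = j <;>
    fin_cases a <;> fin_cases b <;>
      simp [Ht, Dm, N2, Matrix.kroneckerMap_apply, Matrix.one_apply, Matrix.diagonal_apply, h]

lemma Kt_dec (r : ℕ) (lam : ℂ) :
    Kt r lam = ((1 : Matrix (Fin 2) (Fin 2) ℂ) + cc r • N2) ⊗ₖ Qm r lam := by
  ext ⟨a, i⟩ ⟨b, j⟩
  by_cases h : i = j <;>
    fin_cases a <;> fin_cases b <;>
      simp [Kt, Qm, N2, cc, Matrix.kroneckerMap_apply, Matrix.one_apply,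
        Matrix.diagonal_apply, h]

lemma Et_dec (r : ℕ) (lam : ℂ) :
    Et r lam = (1 : Matrix (Fin 2) (Fin 2) ℂ) ⊗ₖ E0 r lam + N2 ⊗ₖ E1 r lam := by
  ext ⟨a, i⟩ ⟨b, j⟩
  by_cases h : (i:ℕ)+1 = (j:ℕ) <;>
    fin_cases a <;> fin_cases b <;>
      simp [Et, E0, E1, fE, N2, Matrix.kroneckerMap_apply, Matrix.one_apply, h]

lemma Ft_dec (r : ℕ) :
    Ft r = (1 : Matrix (Fin 2) (Fin 2) ℂ) ⊗ₖ F0 r := by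
  ext ⟨a, i⟩ ⟨b, j⟩
  by_cases h : (i:ℕ) = (j:ℕ)+1 <;>
    fin_cases a <;> fin_cases b <;>
      simp [Ft, F0, N2, Matrix.kroneckerMap_apply, Matrix.one_apply, h]

lemma P_mul_Pinv (r : ℕ) :
    ((1 : Matrix (Fin 2) (Fin 2) ℂ) + cc r • N2) * (1 + (-(cc r)) • N2) = 1 := by
  ext a b
  fin_cases a <;> fin_cases b <;>
    simp [N2, Matrix.mul_apply, Fin.sum_univ_two, Matrix.one_apply, Matrix.add_apply,
      Matrix.smul_apply]

lemma Kt_mul_Kinv (r : ℕ) (lam : ℂ) :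
    Kt r lam * (((1 : Matrix (Fin 2) (Fin 2) ℂ) + (-(cc r)) • N2) ⊗ₖ Qi r lam) = 1 := by
  rw [Kt_dec, ← Matrix.mul_kronecker_mul, cQQi, P_mul_Pinv, Matrix.one_kronecker_one]

lemma pow_up (r : ℕ) (M : Matrix (Fin 2 × Fin r) (Fin 2 × Fin r) ℂ)
    (hM : ∀ p p' : Fin 2 × Fin r, ¬((p.2:ℕ) + 1 = (p'.2:ℕ)) → M p p' = 0) :
    ∀ (n : ℕ) (p p' : Fin 2 × Fin r), ((p'.2:ℕ) < (p.2:ℕ) + n) → (M^n) p p' = 0 := by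
  intro n
  induction n with
  | zero =>
    intro p p' h
    rw [pow_zero]
    exact Matrix.one_apply_ne (by intro he; subst he; omega)
  | succ n ih =>
    intro p p' h
    rw [pow_succ', Matrix.mul_apply]
    apply Finset.sum_eq_zero
    intro k _
    by_cases hk : (p.2:ℕ)+1 = (k.2:ℕ)
    · rw [ih k p' (by omega), mul_zero]
    · rw [hM p k hk, zero_mul]

lemma pow_down (r : ℕ) (M : Matrix (Fin 2 × Fin r) (Fin 2 × Fin r) ℂ)
    (hM : ∀ p p' : Fin 2 × Fin r, ¬((p.2:ℕ) = (p'.2:ℕ) + 1) → M p p' = 0) :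
    ∀ (n : ℕ) (p p' : Fin 2 × Fin r), ((p.2:ℕ) < (p'.2:ℕ) + n) → (M^n) p p' = 0 := by
  intro n
  induction n with
  | zero =>
    intro p p' h
    rw [pow_zero]
    exact Matrix.one_apply_ne (by intro he; subst he; omega)
  | succ n ih =>
    intro p p' h
    rw [pow_succ', Matrix.mul_apply]
    apply Finset.sum_eq_zero
    intro k _
    by_cases hk : (p.2:ℕ) = (k.2:ℕ)+1
    · rw [ih k p' (by omega), mul_zero]
    · rw [hM p k hk, zero_mul]

lemma mem_W (r : ℕ) (v : Fin 2 × Fin r → ℂ) (hv : ∀ i : Fin r, v (0, i) = 0) :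
    v ∈ Submodule.span ℂ
      (Set.range fun j : Fin r => (Pi.single ((1 : Fin 2), j) 1 : Fin 2 × Fin r → ℂ)) := by
  have hsingle : ∀ (c : ℂ) (p : Fin 2 × Fin r),
      (Pi.single p c : Fin 2 × Fin r → ℂ) = c • (Pi.single p (1:ℂ) : Fin 2 × Fin r → ℂ) := by
    intro c p
    funext q
    by_cases h : q = p <;> simp [Pi.single_apply, h]
  rw [← Finset.univ_sum_single v]
  apply Submodule.sum_mem
  rintro ⟨a, i⟩ _
  by_cases ha : a = (0 : Fin 2)
  · subst ha
    rw [show v ((0 : Fin 2), i) = 0 from hv i, Pi.single_zero]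
    exact Submodule.zero_mem _
  · have ha1 : a = 1 := by omega
    subst ha1
    rw [hsingle]
    exact Submodule.smul_mem _ _ (Submodule.subset_span ⟨i, rfl⟩)

theorem main (r : ℕ) (hr : 2 ≤ r) (lam : ℂ) :
    IsUnit (Kt r lam) ∧
    Kt r lam * Et r lam = qexp r 2 • (Et r lam * Kt r lam) ∧
    Kt r lam * Ft r = qexp r (-2) • (Ft r * Kt r lam) ∧
    Ht r lam * Kt r lam = Kt r lam * Ht r lam ∧
    Ht r lam * Et r lam - Et r lam * Ht r lam = (2 : ℂ) • Et r lam ∧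
    Ht r lam * Ft r - Ft r * Ht r lam = (-2 : ℂ) • Ft r ∧
    Et r lam * Ft r - Ft r * Et r lam
      = (qexp r 1 - qexp r (-1))⁻¹ • (Kt r lam - (Kt r lam)⁻¹) ∧
    Et r lam ^ r = 0 ∧ Ft r ^ r = 0 ∧
    (∀ A ∈ ({Et r lam, Ft r, Ht r lam, Kt r lam} :
        Set (Matrix (Fin 2 × Fin r) (Fin 2 × Fin r) ℂ)),
      ∀ x ∈ Submodule.span ℂ
        (Set.range fun j : Fin r => (Pi.single ((1 : Fin 2), j) 1 : Fin 2 × Fin r → ℂ)),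
        A.mulVec x ∈ Submodule.span ℂ
          (Set.range fun j : Fin r => (Pi.single ((1 : Fin 2), j) 1 : Fin 2 × Fin r → ℂ))) := by
  have hK1 := Kt_mul_Kinv r lam
  have hKinv : (Kt r lam)⁻¹
      = ((1 : Matrix (Fin 2) (Fin 2) ℂ) + (-(cc r)) • N2) ⊗ₖ Qi r lam :=
    Matrix.inv_eq_right_inv hK1
  refine ⟨⟨⟨Kt r lam, _, hK1, mul_eq_one_comm.mp hK1⟩, rfl⟩, ?_, ?_, ?_, ?_, ?_, ?_, ?_, ?_, ?_⟩
  · rw [Kt_dec, Et_dec]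
    simp only [mul_add, add_mul, ← Matrix.mul_kronecker_mul, one_mul, mul_one,
      Matrix.smul_mul, Matrix.mul_smul, N2_sq, Matrix.add_kronecker, Matrix.smul_kronecker,
      Matrix.kronecker_smul, Matrix.kronecker_add, Matrix.zero_kronecker, Matrix.kronecker_zero, kron_sub, sub_kron,
      smul_add, smul_zero, add_zero, zero_add, smul_smul, mul_zero, zero_mul, cQE0, cQE1]
    module
  · rw [Kt_dec, Ft_dec]
    simp only [mul_add, add_mul, ← Matrix.mul_kronecker_mul, one_mul, mul_one,
      Matrix.smul_mul, Matrix.mul_smul, N2_sq, Matrix.add_kronecker, Matrix.smul_kronecker,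
      Matrix.kronecker_smul, Matrix.kronecker_add, Matrix.zero_kronecker, Matrix.kronecker_zero, kron_sub, sub_kron,
      smul_add, smul_zero, add_zero, zero_add, smul_smul, mul_zero, zero_mul, cQF0]
    module
  · rw [Ht_dec, Kt_dec]
    simp only [mul_add, add_mul, ← Matrix.mul_kronecker_mul, one_mul, mul_one,
      Matrix.smul_mul, Matrix.mul_smul, N2_sq, Matrix.add_kronecker, Matrix.smul_kronecker,
      Matrix.kronecker_smul, Matrix.kronecker_add, Matrix.zero_kronecker, Matrix.kronecker_zero, kron_sub, sub_kron,
      smul_add, smul_zero, add_zero, zero_add, smul_smul, mul_zero, zero_mul, cDQ]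
    module
  · rw [Ht_dec, Et_dec]
    simp only [mul_add, add_mul, ← Matrix.mul_kronecker_mul, one_mul, mul_one,
      Matrix.smul_mul, Matrix.mul_smul, N2_sq, Matrix.add_kronecker, Matrix.smul_kronecker,
      Matrix.kronecker_smul, Matrix.kronecker_add, Matrix.zero_kronecker, Matrix.kronecker_zero, kron_sub, sub_kron,
      smul_add, smul_zero, add_zero, zero_add, smul_smul, mul_zero, zero_mul, cDE0, cDE1]
    module
  · rw [Ht_dec, Ft_dec]
    simp only [mul_add, add_mul, ← Matrix.mul_kronecker_mul, one_mul, mul_one,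
      Matrix.smul_mul, Matrix.mul_smul, N2_sq, Matrix.add_kronecker, Matrix.smul_kronecker,
      Matrix.kronecker_smul, Matrix.kronecker_add, Matrix.zero_kronecker, Matrix.kronecker_zero, kron_sub, sub_kron,
      smul_add, smul_zero, add_zero, zero_add, smul_smul, mul_zero, zero_mul, cDF0]
    module
  · rw [hKinv, Et_dec, Ft_dec, Kt_dec]
    simp only [mul_add, add_mul, ← Matrix.mul_kronecker_mul, one_mul, mul_one,
      Matrix.smul_mul, Matrix.mul_smul, N2_sq, Matrix.add_kronecker, Matrix.smul_kronecker,
      Matrix.kronecker_smul, Matrix.kronecker_add, Matrix.zero_kronecker, Matrix.kronecker_zero, kron_sub, sub_kron,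
      smul_add, smul_zero, add_zero, zero_add, smul_smul, mul_zero, zero_mul,
      cEF0 r hr, cEF1 r hr, smul_sub, sub_smul]
    module
  · ext p p'
    rw [Matrix.zero_apply]
    apply pow_up r (Et r lam) ?_ r p p' ?_
    · intro q q' h
      simp only [Et, Matrix.of_apply, if_neg h]
    · have := p'.2.isLt
      omega
  · ext p p'
    rw [Matrix.zero_apply]
    apply pow_down r (Ft r) ?_ r p p' ?_
    · intro q q' h
      simp only [Ft, Matrix.of_apply]
      rw [if_neg (fun hc => h hc.2)]
    · have := p.2.isLt
      omega
  · intro A hA x hx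
    have hgen : ∀ j : Fin r, A.mulVec (Pi.single ((1:Fin 2), j) 1) ∈
        Submodule.span ℂ
          (Set.range fun j : Fin r => (Pi.single ((1 : Fin 2), j) 1 : Fin 2 × Fin r → ℂ)) := by
      intro j
      rw [Matrix.mulVec_single]
      apply mem_W
      intro i
      simp only [MulOpposite.op_one, one_smul, Matrix.col_apply]
      simp only [Set.mem_insert_iff, Set.mem_singleton_iff] at hA
      rcases hA with rfl | rfl | rfl | rfl
      · simp [Et]
      · simp [Ft]
      · simp [Ht]
      · simp [Kt]
    induction hx using Submodule.span_induction with
    | mem v hv =>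
      obtain ⟨j, rfl⟩ := hv
      exact hgen j
    | zero =>
      rw [Matrix.mulVec_zero]
      exact Submodule.zero_mem _
    | add x y hx hy ihx ihy =>
      rw [Matrix.mulVec_add]
      exact Submodule.add_mem _ ihx ihy
    | smul a x hx ih =>
      rw [Matrix.mulVec_smul]
      exact Submodule.smul_mem _ _ ih

end Stmt4Aux

/-- The operators on `Ṽ_λ` satisfy all defining relations of `U̅_q^H(sl₂)`, and the span
`W` of the `v_i^1` is invariant under all of them — so `Ṽ_λ` is a self-extension of the
typical module `V_λ`. -/
theorem stmt4 (r : ℕ) (hr : 2 ≤ r) (lam : ℂ) :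
    IsUnit (Kt r lam) ∧
    Kt r lam * Et r lam = qexp r 2 • (Et r lam * Kt r lam) ∧
    Kt r lam * Ft r = qexp r (-2) • (Ft r * Kt r lam) ∧
    Ht r lam * Kt r lam = Kt r lam * Ht r lam ∧
    Ht r lam * Et r lam - Et r lam * Ht r lam = (2 : ℂ) • Et r lam ∧
    Ht r lam * Ft r - Ft r * Ht r lam = (-2 : ℂ) • Ft r ∧
    Et r lam * Ft r - Ft r * Et r lam
      = (qexp r 1 - qexp r (-1))⁻¹ • (Kt r lam - (Kt r lam)⁻¹) ∧
    Et r lam ^ r = 0 ∧ Ft r ^ r = 0 ∧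
    (∀ A ∈ ({Et r lam, Ft r, Ht r lam, Kt r lam} :
        Set (Matrix (Fin 2 × Fin r) (Fin 2 × Fin r) ℂ)),
      ∀ x ∈ Submodule.span ℂ
        (Set.range fun j : Fin r => (Pi.single ((1 : Fin 2), j) 1 : Fin 2 × Fin r → ℂ)),
        A.mulVec x ∈ Submodule.span ℂ
          (Set.range fun j : Fin r => (Pi.single ((1 : Fin 2), j) 1 : Fin 2 × Fin r → ℂ))) :=
  Stmt4Aux.main r hr lam
end

section
/- Let 0 ≤ i ≤ r−2, ℓ ∈ ℤ, and λ = 1 + i − r. Then, as ε → 0 through nonzero complex values, the quantity (−1)^{(ℓ+1)(r−1)} · r · ( {λ+ε}/{r(λ+ε)} + {−λ+ε}/{r(−λ+ε)} ) tends to (−1)^{ℓ(r−1)+i+1} ( q^{i+1} + q^{−(i+1)} ). (This says that the modified quantum dimension of the deformable family X_ε tends to the modified quantum dimension of the projective module P_i ⊗ ℂ^H_{ℓr}.) -/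
/-- With `λ = 1+i−r`, as `ε → 0` through nonzero values,
`(−1)^{(ℓ+1)(r−1)}·r·({λ+ε}/{r(λ+ε)} + {−λ+ε}/{r(−λ+ε)})`
tends to `(−1)^{ℓ(r−1)+i+1}(q^{i+1} + q^{−(i+1)})`: the modified quantum dimension of the
deformable family `X_ε` tends to that of `P_i ⊗ ℂ^H_{ℓr}`. -/
theorem stmt8 (r : ℕ) (hr : 2 ≤ r) (i : ℕ) (hi : i ≤ r - 2) (l : ℤ) :
    Filter.Tendsto
      (fun ε : ℂ =>
        (-1 : ℂ) ^ ((l + 1) * ((r : ℤ) - 1)) * (r : ℂ) *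
          (qbr r ((1 + (i : ℂ) - (r : ℂ)) + ε) / qbr r ((r : ℂ) * ((1 + (i : ℂ) - (r : ℂ)) + ε))
            + qbr r (-(1 + (i : ℂ) - (r : ℂ)) + ε)
              / qbr r ((r : ℂ) * (-(1 + (i : ℂ) - (r : ℂ)) + ε))))
      (nhdsWithin 0 {(0 : ℂ)}ᶜ)
      (nhds ((-1 : ℂ) ^ (l * ((r : ℤ) - 1) + (i : ℤ) + 1)
        * (qexp r ((i : ℂ) + 1) + qexp r (-((i : ℂ) + 1))))) := by
  have hr0 : (r:ℂ) ≠ 0 := by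
    exact_mod_cast Nat.cast_ne_zero.mpr (by omega)
  set n : ℤ := 1 + (i:ℤ) - (r:ℤ) with hn
  have hlam : (1 + (i:ℂ) - (r:ℂ)) = ((n:ℤ):ℂ) := by push_cast [hn]; ring
  -- generic facts
  have hone : (-1:ℂ) ≠ 0 := by norm_num
  have hneg : ∀ m : ℤ, ((-1:ℂ))^(-m) = (-1:ℂ)^m := by
    intro m
    have h2 : ((-1:ℂ))^m * ((-1:ℂ))^m = 1 := by
      rw [← zpow_add₀ hone, show m+m = 2*m by ring, zpow_mul]; norm_num
    rw [zpow_neg]; exact inv_eq_of_mul_eq_one_left h2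
  have hinv : ∀ m : ℤ, (((-1:ℂ))^m)⁻¹ = (-1:ℂ)^m := by
    intro m; rw [← zpow_neg, hneg]
  have qexp_add : ∀ a b : ℂ, qexp r (a+b) = qexp r a * qexp r b := by
    intro a b; rw [qexp, qexp, qexp, ← Complex.exp_add]; congr 1; ring
  have hE : ∀ w : ℂ, qexp r ((r:ℂ)*w) = Complex.exp ((Real.pi:ℂ)*Complex.I*w) := by
    intro w; rw [qexp]; congr 1; field_simp
  have key : ∀ (k : ℤ) (w : ℂ), Complex.exp ((Real.pi:ℂ)*Complex.I*((k:ℂ)+w)) =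
      (-1:ℂ)^k * Complex.exp ((Real.pi:ℂ)*Complex.I*w) := by
    intro k w
    rw [show (Real.pi:ℂ)*Complex.I*((k:ℂ)+w) = (k:ℂ)*((Real.pi:ℂ)*Complex.I) + (Real.pi:ℂ)*Complex.I*w by ring,
      Complex.exp_add, Complex.exp_int_mul, Complex.exp_pi_mul_I]
  have hden : ∀ (m : ℤ) (ε : ℂ), qbr r ((r:ℂ)*((m:ℂ)+ε)) = (-1:ℂ)^m * qbr r ((r:ℂ)*ε) := by
    intro m ε
    rw [qbr, qbr, hE, hE, ← mul_neg, hE, ← mul_neg, hE, key,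
      show -((m:ℂ)+ε) = ((-m:ℤ):ℂ) + (-ε) by push_cast; ring, key, hneg]
    ring
  have hnum : ∀ ε : ℂ, qbr r ((n:ℂ)+ε) + qbr r (-(n:ℂ)+ε)
      = (qexp r ((n:ℤ):ℂ) + qexp r (-((n:ℤ):ℂ))) * qbr r ε := by
    intro ε
    rw [qbr, qbr, qbr, qexp_add,
      show -(((n:ℤ):ℂ)+ε) = (-((n:ℤ):ℂ)) + (-ε) by ring, qexp_add,
      qexp_add, show -(-((n:ℤ):ℂ)+ε) = ((n:ℤ):ℂ) + (-ε) by ring, qexp_add]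
    ring
  -- the ratio limit
  have hpi : (2*(Real.pi:ℂ)*Complex.I) ≠ 0 := by
    simp [Real.pi_ne_zero, Complex.I_ne_zero]
  have hN : HasDerivAt (fun ε : ℂ => qbr r ε) (2*Real.pi*Complex.I/r) 0 := by
    have h1 : HasDerivAt (fun ε : ℂ => (Real.pi : ℂ) * Complex.I * ε / r) ((Real.pi:ℂ)*Complex.I/r) 0 := by
      simpa using ((hasDerivAt_id (0:ℂ)).const_mul ((Real.pi:ℂ) * Complex.I)).div_const r
    have h2 : HasDerivAt (fun ε : ℂ => (Real.pi:ℂ) * Complex.I * (-ε) / r) (-((Real.pi:ℂ)*Complex.I/r)) 0 := by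
      simpa [mul_neg, neg_div] using h1.fun_neg
    have h3 := h1.cexp.sub h2.cexp
    simp only [mul_zero, zero_div, mul_neg, neg_zero, Complex.exp_zero, one_mul, sub_neg_eq_add] at h3
    rw [show (Real.pi:ℂ)*Complex.I/r + (Real.pi:ℂ)*Complex.I/r = 2*Real.pi*Complex.I/r by ring] at h3
    exact h3.congr_of_eventuallyEq (by filter_upwards with x; simp [qbr, qexp])
  have hD : HasDerivAt (fun ε : ℂ => qbr r ((r:ℂ)*ε)) (2*Real.pi*Complex.I) 0 := by
    have h1 : HasDerivAt (fun ε : ℂ => (Real.pi : ℂ) * Complex.I * ε) ((Real.pi:ℂ)*Complex.I) 0 := by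
      simpa using (hasDerivAt_id (0:ℂ)).const_mul ((Real.pi:ℂ) * Complex.I)
    have h2 : HasDerivAt (fun ε : ℂ => (Real.pi:ℂ) * Complex.I * (-ε)) (-((Real.pi:ℂ)*Complex.I)) 0 := by
      simpa [mul_neg] using h1.fun_neg
    have h3 := h1.cexp.sub h2.cexp
    simp only [mul_zero, mul_neg, neg_zero, Complex.exp_zero, one_mul, sub_neg_eq_add] at h3
    rw [show (Real.pi:ℂ)*Complex.I + (Real.pi:ℂ)*Complex.I = 2*Real.pi*Complex.I by ring] at h3
    refine h3.congr_of_eventuallyEq ?_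
    filter_upwards with x
    rw [qbr, hE, ← mul_neg, hE, mul_neg]
    rfl
  have hN0 : qbr r 0 = 0 := by simp [qbr, qexp]
  have tN : Filter.Tendsto (fun ε : ℂ => qbr r ε / ε) (nhdsWithin 0 {(0:ℂ)}ᶜ) (nhds (2*Real.pi*Complex.I/r)) := by
    have := hasDerivAt_iff_tendsto_slope.mp hN
    simpa [slope_fun_def, hN0, div_eq_inv_mul] using this
  have tD : Filter.Tendsto (fun ε : ℂ => qbr r ((r:ℂ)*ε) / ε) (nhdsWithin 0 {(0:ℂ)}ᶜ) (nhds (2*Real.pi*Complex.I)) := by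
    have := hasDerivAt_iff_tendsto_slope.mp hD
    simpa [slope_fun_def, hN0, div_eq_inv_mul] using this
  have tR : Filter.Tendsto (fun ε : ℂ => qbr r ε / qbr r ((r:ℂ)*ε)) (nhdsWithin 0 {(0:ℂ)}ᶜ)
      (nhds ((r:ℂ)⁻¹)) := by
    have hdiv := tN.div tD hpi
    have heq : (fun ε : ℂ => (qbr r ε / ε) / (qbr r ((r:ℂ)*ε) / ε)) =ᶠ[nhdsWithin 0 {(0:ℂ)}ᶜ]
        (fun ε : ℂ => qbr r ε / qbr r ((r:ℂ)*ε)) := by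
      filter_upwards [self_mem_nhdsWithin] with ε hε
      rw [div_div_div_cancel_right₀ (by simpa using hε : ε ≠ 0)]
    have hval : (2*(Real.pi:ℂ)*Complex.I/r) / (2*(Real.pi:ℂ)*Complex.I) = (r:ℂ)⁻¹ := by
      field_simp
    rw [← hval]
    exact hdiv.congr' heq
  -- pointwise identity
  set C : ℂ := (-1 : ℂ) ^ ((l + 1) * ((r : ℤ) - 1)) * (r:ℂ) *
      ((-1:ℂ)^n * (qexp r ((n:ℤ):ℂ) + qexp r (-((n:ℤ):ℂ)))) with hC
  have hfun : ∀ ε : ℂ,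
      (-1 : ℂ) ^ ((l + 1) * ((r : ℤ) - 1)) * (r : ℂ) *
        (qbr r ((1 + (i : ℂ) - (r : ℂ)) + ε) / qbr r ((r : ℂ) * ((1 + (i : ℂ) - (r : ℂ)) + ε))
          + qbr r (-(1 + (i : ℂ) - (r : ℂ)) + ε)
            / qbr r ((r : ℂ) * (-(1 + (i : ℂ) - (r : ℂ)) + ε)))
      = C * (qbr r ε / qbr r ((r:ℂ)*ε)) := by
    intro ε
    rw [hlam, hden n ε, show (-(((n:ℤ):ℂ))+ε) = (((-n:ℤ):ℂ)+ε) by push_cast; ring,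
      hden (-n) ε, hneg, show (((-n:ℤ):ℂ)+ε) = (-((n:ℤ):ℂ)+ε) by push_cast; ring,
      ← add_div, hnum, hC]
    rw [div_eq_mul_inv, mul_inv, hinv, div_eq_mul_inv]
    ring
  -- final constant computation
  have hqr : qexp r (-(r:ℂ)) = -1 := by
    rw [qexp, show (Real.pi:ℂ)*Complex.I*(-(r:ℂ))/r = -((Real.pi:ℂ)*Complex.I) by field_simp,
      Complex.exp_neg, Complex.exp_pi_mul_I]
    norm_num
  have hqr' : qexp r ((r:ℂ)) = -1 := by
    rw [qexp, show (Real.pi:ℂ)*Complex.I*((r:ℂ))/r = (Real.pi:ℂ)*Complex.I by field_simp,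
      Complex.exp_pi_mul_I]
  have hq1 : qexp r ((n:ℤ):ℂ) = -qexp r ((i:ℂ)+1) := by
    rw [show ((n:ℤ):ℂ) = ((i:ℂ)+1) + (-(r:ℂ)) by push_cast [hn]; ring, qexp_add, hqr]
    ring
  have hq2 : qexp r (-((n:ℤ):ℂ)) = -qexp r (-((i:ℂ)+1)) := by
    rw [show (-((n:ℤ):ℂ)) = (-((i:ℂ)+1)) + ((r:ℂ)) by push_cast [hn]; ring, qexp_add, hqr']
    ring
  have hCval : C * (r:ℂ)⁻¹ = (-1 : ℂ) ^ (l * ((r : ℤ) - 1) + (i : ℤ) + 1)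
      * (qexp r ((i : ℂ) + 1) + qexp r (-((i : ℂ) + 1))) := by
    rw [hC, hq1, hq2,
      show (-1 : ℂ) ^ (l * ((r : ℤ) - 1) + (i : ℤ) + 1)
        = (-1:ℂ)^((l + 1) * ((r : ℤ) - 1)) * (-1:ℂ)^n * (-1:ℂ)^(1:ℤ) by
          rw [← zpow_add₀ hone, ← zpow_add₀ hone]; congr 1; rw [hn]; ring]
    have : (r:ℂ) * (r:ℂ)⁻¹ = 1 := mul_inv_cancel₀ hr0
    field_simp
    ring
  rw [← hCval]
  exact (tR.const_mul C).congr (fun ε => (hfun ε).symm)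
end

section
/- Let α ∈ ℂ, let 0 ≤ j ≤ r−2, and define g(λ) = q^{αλ} {rλ}/{λ} (the scalar by which the open Hopf link colored by the typical module V_α acts on V_λ). Then as ε → 0 through nonzero complex values: (i) g(1+j−r+ε) → 0 and g(r−1−j+ε) → 0; (ii) (−1/([1+j][ε])) · ( g(r−1−j+ε) − g(1+j−r+ε) ) tends to ((−1)^{r−j} r/[j+1]²) · ( q^{(r−1−j)α} + q^{−(r−1−j)α} ). Thus the open Hopf link Φ_{V_α, P_j} acting on the projective cover P_j is purely nilpotent, with nilpotent coefficient b_{V_α} = (−1)^{r−j} r ( q^{(r−1−j)α} + q^{−(r−1−j)α} )/[j+1]². -/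
/-- The scalar by which the open Hopf link colored by the typical module `V_α` acts on `V_λ`. -/
noncomputable def gV (r : ℕ) (α lam : ℂ) : ℂ :=
  qexp r (α * lam) * qbr r ((r : ℂ) * lam) / qbr r lam

open Complex Filter Real

lemma aux_exp_pi_nat (m : ℕ) : Complex.exp ((Real.pi : ℂ) * Complex.I * m) = (-1 : ℂ) ^ m := by
  rw [show (Real.pi : ℂ) * Complex.I * m = (m : ℂ) * ((Real.pi : ℂ) * Complex.I) by ring,
    Complex.exp_nat_mul, Complex.exp_pi_mul_I]

lemma aux_exp_pi_nat_neg (m : ℕ) :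
    Complex.exp (-((Real.pi : ℂ) * Complex.I * m)) = (-1 : ℂ) ^ m := by
  rw [Complex.exp_neg, aux_exp_pi_nat, ← inv_pow]
  norm_num

lemma qbr_neg (r : ℕ) (z : ℂ) : qbr r (-z) = - qbr r z := by
  simp only [qbr, neg_neg]; ring

/-- `{r z} = exp(πIz) - exp(-πIz)` flavor: the `(-1)^m` shift identities. -/
lemma qbr_shift (r : ℕ) (hr : (r : ℂ) ≠ 0) (m : ℕ) (ε : ℂ) :
    qbr r ((r : ℂ) * ((m : ℂ) + ε)) = (-1 : ℂ) ^ m * qbr r ((r : ℂ) * ε) := by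
  simp only [qbr, qexp]
  rw [show (Real.pi : ℂ) * Complex.I * ((r : ℂ) * ((m : ℂ) + ε)) / r
        = (Real.pi : ℂ) * Complex.I * m + (Real.pi : ℂ) * Complex.I * ((r:ℂ) * ε) / r by
      field_simp,
    show (Real.pi : ℂ) * Complex.I * (-((r : ℂ) * ((m : ℂ) + ε))) / r
        = (-((Real.pi : ℂ) * Complex.I * m)) + (Real.pi : ℂ) * Complex.I * (-((r:ℂ) * ε)) / r by
      field_simp; ring,
    Complex.exp_add, Complex.exp_add, aux_exp_pi_nat, aux_exp_pi_nat_neg]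
  ring

lemma qbr_shift_neg (r : ℕ) (hr : (r : ℂ) ≠ 0) (m : ℕ) (ε : ℂ) :
    qbr r ((r : ℂ) * (-(m : ℂ) + ε)) = (-1 : ℂ) ^ m * qbr r ((r : ℂ) * ε) := by
  simp only [qbr, qexp]
  rw [show (Real.pi : ℂ) * Complex.I * ((r : ℂ) * (-(m : ℂ) + ε)) / r
        = (-((Real.pi : ℂ) * Complex.I * m)) + (Real.pi : ℂ) * Complex.I * ((r:ℂ) * ε) / r by
      field_simp,
    show (Real.pi : ℂ) * Complex.I * (-((r : ℂ) * (-(m : ℂ) + ε))) / r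
        = (Real.pi : ℂ) * Complex.I * m + (Real.pi : ℂ) * Complex.I * (-((r:ℂ) * ε)) / r by
      field_simp; ring,
    Complex.exp_add, Complex.exp_add, aux_exp_pi_nat, aux_exp_pi_nat_neg]
  ring

/-- `{r - z} = {z}`. -/
lemma qbr_r_sub (r : ℕ) (hr : (r : ℂ) ≠ 0) (z : ℂ) : qbr r ((r : ℂ) - z) = qbr r z := by
  simp only [qbr, qexp]
  rw [show (Real.pi : ℂ) * Complex.I * ((r : ℂ) - z) / r
        = (Real.pi : ℂ) * Complex.I + (Real.pi : ℂ) * Complex.I * (-z) / r by field_simp; ring,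
    show (Real.pi : ℂ) * Complex.I * (-((r : ℂ) - z)) / r
        = (Real.pi : ℂ) * Complex.I * z / r - (Real.pi : ℂ) * Complex.I by field_simp; ring,
    Complex.exp_add, Complex.exp_sub, Complex.exp_pi_mul_I]
  field_simp
  ring

lemma qbr_eq_zero (r : ℕ) (hr : (r : ℂ) ≠ 0) (z : ℂ) (h : qbr r z = 0) :
    ∃ n : ℤ, z = n * r := by
  simp only [qbr, qexp, sub_eq_zero] at h
  rw [Complex.exp_eq_exp_iff_exists_int] at h
  obtain ⟨n, hn⟩ := h
  refine ⟨n, ?_⟩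
  have hπ : (Real.pi : ℂ) ≠ 0 := by
    exact_mod_cast Real.pi_ne_zero
  have hI := Complex.I_ne_zero
  field_simp at hn
  have h2 : (2 * (Real.pi : ℂ) * Complex.I) * z = (2 * (Real.pi : ℂ) * Complex.I) * (n * r) := by
    linear_combination (Real.pi : ℂ) * Complex.I * hn
  exact mul_left_cancel₀ (by simp [hπ, hI]) h2

lemma qbr_nat_ne_zero (r : ℕ) (hr : 2 ≤ r) (k : ℕ) (h1 : 0 < k) (h2 : k < r) :
    qbr r (k : ℂ) ≠ 0 := by
  intro h
  obtain ⟨n, hn⟩ := qbr_eq_zero r (by exact_mod_cast (by omega : r ≠ 0)) _ h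
  have hz : (k : ℤ) = n * r := by exact_mod_cast hn
  have h1' : (0 : ℤ) < k := by exact_mod_cast h1
  have h2' : (k : ℤ) < r := by exact_mod_cast h2
  have hrz : (0 : ℤ) < r := by exact_mod_cast (by omega : 0 < r)
  rcases lt_trichotomy n 0 with h | h | h
  · nlinarith
  · simp [h] at hz; omega
  · nlinarith

lemma hasDerivAt_expsub (c : ℂ) :
    HasDerivAt (fun z : ℂ => Complex.exp (c * z) - Complex.exp (-(c * z))) (2 * c) 0 := by
  have h1 : HasDerivAt (fun z : ℂ => c * z) c 0 := by
    simpa using (hasDerivAt_id (0 : ℂ)).const_mul c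
  have h2 : HasDerivAt (fun z : ℂ => -(c * z)) (-c) 0 := h1.neg
  have h := h1.cexp.sub h2.cexp
  norm_num at h
  rw [two_mul]
  exact h

lemma tendsto_expsub_div (c : ℂ) :
    Filter.Tendsto (fun z : ℂ => (Complex.exp (c * z) - Complex.exp (-(c * z))) / z)
      (nhdsWithin 0 {(0 : ℂ)}ᶜ) (nhds (2 * c)) := by
  have h := hasDerivAt_expsub c
  rw [hasDerivAt_iff_tendsto_slope] at h
  refine h.congr fun z => ?_
  simp [slope_def_field]

/-- The open Hopf link `Φ_{V_α,P_j}` is purely nilpotent: as `ε → 0`, `ε ≠ 0`,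
(i) `g(1+j−r+ε) → 0` and `g(r−1−j+ε) → 0`, and
(ii) `(−1/([1+j][ε]))(g(r−1−j+ε) − g(1+j−r+ε)) → ((−1)^{r−j} r/[j+1]²)(q^{(r−1−j)α}+q^{−(r−1−j)α})`. -/
theorem stmt10 (r : ℕ) (hr : 2 ≤ r) (j : ℕ) (hj : j ≤ r - 2) (α : ℂ) :
    Filter.Tendsto (fun ε : ℂ => gV r α (1 + (j : ℂ) - (r : ℂ) + ε))
      (nhdsWithin 0 {(0 : ℂ)}ᶜ) (nhds 0) ∧
    Filter.Tendsto (fun ε : ℂ => gV r α ((r : ℂ) - 1 - (j : ℂ) + ε))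
      (nhdsWithin 0 {(0 : ℂ)}ᶜ) (nhds 0) ∧
    Filter.Tendsto
      (fun ε : ℂ => (-1 / (qnum r (1 + (j : ℂ)) * qnum r ε))
        * (gV r α ((r : ℂ) - 1 - (j : ℂ) + ε) - gV r α (1 + (j : ℂ) - (r : ℂ) + ε)))
      (nhdsWithin 0 {(0 : ℂ)}ᶜ)
      (nhds (((-1 : ℂ) ^ (r - j) * (r : ℂ) / (qnum r ((j : ℂ) + 1)) ^ 2)
        * (qexp r (((r : ℂ) - 1 - (j : ℂ)) * α) + qexp r (-(((r : ℂ) - 1 - (j : ℂ)) * α))))) := by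
  have hrC : (r : ℂ) ≠ 0 := by exact_mod_cast (by omega : r ≠ 0)
  set m : ℕ := r - 1 - j with hmdef
  have hm1 : m + 1 + j = r := by omega
  have hμ : ((m : ℕ) : ℂ) = (r : ℂ) - 1 - (j : ℂ) := by
    have := congrArg (Nat.cast : ℕ → ℂ) hm1
    push_cast at this
    linear_combination this
  have harg1 : ∀ ε : ℂ, 1 + (j : ℂ) - (r : ℂ) + ε = -(m : ℂ) + ε := by
    intro ε; rw [hμ]; ring
  have harg2 : ∀ ε : ℂ, (r : ℂ) - 1 - (j : ℂ) + ε = (m : ℂ) + ε := by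
    intro ε; rw [hμ]
  -- bracket facts
  have hbr0 : qbr r 0 = 0 := by simp [qbr]
  have hp : qbr r (1 + (j : ℂ)) ≠ 0 := by
    have := qbr_nat_ne_zero r hr (j + 1) (by omega) (by omega)
    push_cast at this
    simpa [add_comm] using this
  have ho : qbr r 1 ≠ 0 := by
    have := qbr_nat_ne_zero r hr 1 (by omega) (by omega)
    exact_mod_cast this
  have hμbr : qbr r ((m : ℂ)) = qbr r (1 + (j : ℂ)) := by
    rw [show ((m : ℕ) : ℂ) = (r : ℂ) - (1 + (j : ℂ)) by rw [hμ]; ring, qbr_r_sub r hrC]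
  have hμne : qbr r ((m : ℂ)) ≠ 0 := by rw [hμbr]; exact hp
  have hμnegne : qbr r (-(m : ℂ)) ≠ 0 := by rw [qbr_neg]; simpa using hμne
  -- continuity of pieces
  have hcontqbr' : Continuous (fun z : ℂ => qbr r z) := by
    unfold qbr qexp
    fun_prop
  have hcontexp : Continuous (fun z : ℂ => qexp r z) := by
    unfold qexp
    fun_prop
  -- part (i) helper
  have hzero : ∀ s : ℂ, qbr r ((r : ℂ) * s) = 0 → qbr r s ≠ 0 →
      Filter.Tendsto (fun ε : ℂ => gV r α (s + ε)) (nhdsWithin 0 {(0 : ℂ)}ᶜ) (nhds 0) := by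
    intro s h0 hs
    have hc : ContinuousAt (fun ε : ℂ => gV r α (s + ε)) 0 := by
      unfold gV
      apply ContinuousAt.div
      · exact ((hcontexp.comp (by fun_prop)).mul
          (hcontqbr'.comp (by fun_prop : Continuous fun ε : ℂ => (r:ℂ) * (s + ε)))).continuousAt
      · exact (hcontqbr'.comp (by fun_prop : Continuous fun ε : ℂ => s + ε)).continuousAt
      · simpa using hs
    have h2 : Filter.Tendsto (fun ε : ℂ => gV r α (s + ε)) (nhdsWithin 0 {(0 : ℂ)}ᶜ)
        (nhds (gV r α (s + 0))) := hc.tendsto.mono_left nhdsWithin_le_nhds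
    simpa [gV, h0] using h2
  have hzm : qbr r ((r : ℂ) * (-(m : ℂ))) = 0 := by
    have := qbr_shift_neg r hrC m 0
    simpa [hbr0] using this
  have hzm' : qbr r ((r : ℂ) * ((m : ℂ))) = 0 := by
    have := qbr_shift r hrC m 0
    simpa [hbr0] using this
  have part1 : Filter.Tendsto (fun ε : ℂ => gV r α (1 + (j : ℂ) - (r : ℂ) + ε))
      (nhdsWithin 0 {(0 : ℂ)}ᶜ) (nhds 0) := by
    simp only [harg1]
    exact hzero (-(m : ℂ)) hzm hμnegne
  have part2 : Filter.Tendsto (fun ε : ℂ => gV r α ((r : ℂ) - 1 - (j : ℂ) + ε))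
      (nhdsWithin 0 {(0 : ℂ)}ᶜ) (nhds 0) := by
    simp only [harg2]
    exact hzero ((m : ℂ)) hzm' hμne
  refine ⟨part1, part2, ?_⟩
  -- part (ii)
  have hπ : (Real.pi : ℂ) ≠ 0 := by exact_mod_cast Real.pi_ne_zero
  set K : ℂ := (-1 : ℂ) ^ (m + 1) * qbr r 1 / qnum r (1 + (j : ℂ)) with hK
  -- the unconditional algebraic identity
  have hE : ∀ ε : ℂ, (-1 / (qnum r (1 + (j : ℂ)) * qnum r ε))
        * (gV r α ((m : ℂ) + ε) - gV r α (-(m : ℂ) + ε))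
      = K * (qbr r ((r : ℂ) * ε) / qbr r ε)
        * (qexp r (α * ((m : ℂ) + ε)) / qbr r ((m : ℂ) + ε)
            - qexp r (α * (-(m : ℂ) + ε)) / qbr r (-(m : ℂ) + ε)) := by
    intro ε
    simp only [hK, gV, qnum, qbr_shift r hrC m ε, qbr_shift_neg r hrC m ε]
    simp only [div_eq_mul_inv, mul_inv, inv_inv, pow_succ]
    ring
  -- the ratio limit {rε}/{ε} → r
  have hS : Filter.Tendsto (fun ε : ℂ => qbr r ((r : ℂ) * ε) / qbr r ε)
      (nhdsWithin 0 {(0 : ℂ)}ᶜ) (nhds (r : ℂ)) := by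
    have t1 := tendsto_expsub_div ((Real.pi : ℂ) * Complex.I)
    have t2 := tendsto_expsub_div ((Real.pi : ℂ) * Complex.I / r)
    have hd : (2 * ((Real.pi : ℂ) * Complex.I / r)) ≠ 0 := by
      simp [hπ, Complex.I_ne_zero, hrC]
    have hq := t1.div t2 hd
    have hval : (2 * ((Real.pi : ℂ) * Complex.I)) / (2 * ((Real.pi : ℂ) * Complex.I / r))
        = (r : ℂ) := by
      field_simp
    rw [hval] at hq
    refine Filter.Tendsto.congr' ?_ hq
    filter_upwards [self_mem_nhdsWithin] with z hz
    have hz0 : z ≠ 0 := hz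
    have e1 : qbr r ((r : ℂ) * z)
        = Complex.exp (((Real.pi : ℂ) * Complex.I) * z)
          - Complex.exp (-(((Real.pi : ℂ) * Complex.I) * z)) := by
      simp only [qbr, qexp]
      rw [show (Real.pi : ℂ) * Complex.I * ((r : ℂ) * z) / r
            = (Real.pi : ℂ) * Complex.I * z by field_simp,
        show (Real.pi : ℂ) * Complex.I * (-((r : ℂ) * z)) / r
            = -((Real.pi : ℂ) * Complex.I * z) by field_simp]
    have e2 : qbr r z
        = Complex.exp (((Real.pi : ℂ) * Complex.I / r) * z)
          - Complex.exp (-(((Real.pi : ℂ) * Complex.I / r) * z)) := by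
      simp only [qbr, qexp]
      rw [show (Real.pi : ℂ) * Complex.I * z / r
            = (Real.pi : ℂ) * Complex.I / r * z by ring,
        show (Real.pi : ℂ) * Complex.I * (-z) / r
            = -((Real.pi : ℂ) * Complex.I / r * z) by ring]
    simp only [Pi.div_apply]
    rw [e1, e2, div_div_div_cancel_right₀ hz0]
  -- continuity limit of the bracketed difference
  have hBc : ContinuousAt (fun ε : ℂ => qexp r (α * ((m : ℂ) + ε)) / qbr r ((m : ℂ) + ε)
      - qexp r (α * (-(m : ℂ) + ε)) / qbr r (-(m : ℂ) + ε)) 0 := by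
    apply ContinuousAt.sub
    · apply ContinuousAt.div
      · exact (hcontexp.comp
          (by fun_prop : Continuous fun ε : ℂ => α * ((m : ℂ) + ε))).continuousAt
      · exact (hcontqbr'.comp
          (by fun_prop : Continuous fun ε : ℂ => (m : ℂ) + ε)).continuousAt
      · simpa using hμne
    · apply ContinuousAt.div
      · exact (hcontexp.comp
          (by fun_prop : Continuous fun ε : ℂ => α * (-(m : ℂ) + ε))).continuousAt
      · exact (hcontqbr'.comp
          (by fun_prop : Continuous fun ε : ℂ => -(m : ℂ) + ε)).continuousAt
      · simpa using hμnegne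
  have hB : Filter.Tendsto (fun ε : ℂ => qexp r (α * ((m : ℂ) + ε)) / qbr r ((m : ℂ) + ε)
        - qexp r (α * (-(m : ℂ) + ε)) / qbr r (-(m : ℂ) + ε))
      (nhdsWithin 0 {(0 : ℂ)}ᶜ)
      (nhds (qexp r (α * ((m : ℂ) + 0)) / qbr r ((m : ℂ) + 0)
        - qexp r (α * (-(m : ℂ) + 0)) / qbr r (-(m : ℂ) + 0))) :=
    hBc.tendsto.mono_left nhdsWithin_le_nhds
  have hKSB := (hS.const_mul K).mul hB
  have hfin : K * (r : ℂ) * (qexp r (α * ((m : ℂ) + 0)) / qbr r ((m : ℂ) + 0)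
        - qexp r (α * (-(m : ℂ) + 0)) / qbr r (-(m : ℂ) + 0))
      = ((-1 : ℂ) ^ (r - j) * (r : ℂ) / (qnum r ((j : ℂ) + 1)) ^ 2)
        * (qexp r (((r : ℂ) - 1 - (j : ℂ)) * α) + qexp r (-(((r : ℂ) - 1 - (j : ℂ)) * α))) := by
    rw [← hμ]
    rw [show α * ((m : ℂ) + 0) = (m : ℂ) * α by ring,
      show α * (-(m : ℂ) + 0) = -((m : ℂ) * α) by ring,
      show ((m : ℂ) + 0) = (m : ℂ) by ring,
      show (-(m : ℂ) + 0) = -(m : ℂ) by ring,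
      qbr_neg, hK]
    rw [show m + 1 = r - j by omega]
    simp only [qnum, hμbr, show ((j : ℂ) + 1) = 1 + (j : ℂ) by ring]
    rw [div_neg, sub_neg_eq_add, ← add_div]
    field_simp
  rw [← hfin]
  simp only [harg1, harg2]
  exact Filter.Tendsto.congr (fun ε => (hE ε).symm) hKSB
end

section
/- Let α, β ∈ ℂ with α ∉ rℤ. Set α₊ = √(2r), α₋ = −√(2/r), α₀ = α₊ + α₋, ε = −iα/√(2r) and λ = (β + r − 1)/√(2r). Then e^{πε(2λ−α₀)} · sin(−π α₊ ε i)/sin(π α₋ ε i) = e^{−πiαβ/r} · sin(πα)/sin(πα/r) = e^{−πiαβ/r} · {rα}/{α}. (This identifies the regularized asymptotic dimension of the typical Fock module F_λ^ε of the singlet algebra with the normalized modified trace of the open Hopf link of V_β on V_α.) -/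
/-- With `α₊ = √(2r)`, `α₋ = −√(2/r)`, `α₀ = α₊+α₋`, `ε = −iα/√(2r)`, `λ = (β+r−1)/√(2r)`:
`e^{πε(2λ−α₀)} sin(−πα₊εi)/sin(πα₋εi) = e^{−πiαβ/r} sin(πα)/sin(πα/r) = e^{−πiαβ/r}{rα}/{α}`. -/
theorem stmt14 (r : ℕ) (hr : 2 ≤ r) (α β : ℂ) (hα : ∀ m : ℤ, α ≠ (r : ℂ) * m) :
    let ap : ℂ := (Real.sqrt (2 * r) : ℝ)
    let am : ℂ := -(Real.sqrt (2 / r) : ℝ)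
    let a0 : ℂ := ap + am
    let ε : ℂ := -Complex.I * α / (Real.sqrt (2 * r) : ℝ)
    let lam : ℂ := (β + (r : ℂ) - 1) / (Real.sqrt (2 * r) : ℝ)
    (Complex.exp ((Real.pi : ℂ) * ε * (2 * lam - a0))
        * Complex.sin (-(Real.pi : ℂ) * ap * ε * Complex.I)
        / Complex.sin ((Real.pi : ℂ) * am * ε * Complex.I)
      = Complex.exp (-(Real.pi : ℂ) * Complex.I * α * β / (r : ℂ))
        * Complex.sin ((Real.pi : ℂ) * α) / Complex.sin ((Real.pi : ℂ) * α / (r : ℂ))) ∧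
    (Complex.exp (-(Real.pi : ℂ) * Complex.I * α * β / (r : ℂ))
        * Complex.sin ((Real.pi : ℂ) * α) / Complex.sin ((Real.pi : ℂ) * α / (r : ℂ))
      = Complex.exp (-(Real.pi : ℂ) * Complex.I * α * β / (r : ℂ))
        * qbr r ((r : ℂ) * α) / qbr r α) := by
  intro ap am a0 ε lam
  have hrR : (0:ℝ) < r := by positivity
  have hr0 : (r:ℂ) ≠ 0 := by exact_mod_cast hrR.ne'
  set s : ℝ := Real.sqrt (2 * r) with hsdef
  set t : ℝ := Real.sqrt (2 / r) with htdef
  have hs2 : (s:ℂ) * s = 2 * r := by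
    have : s * s = 2 * r := Real.mul_self_sqrt (by positivity)
    exact_mod_cast this
  have hts : (t:ℂ) * s = 2 := by
    have : t * s = 2 := by
      rw [htdef, hsdef, ← Real.sqrt_mul (by positivity)]
      rw [show 2 / (r:ℝ) * (2 * r) = 2 * 2 * (r / r) by ring, div_self hrR.ne', mul_one]
      rw [show (2:ℝ)*2 = 2^2 by ring, Real.sqrt_sq (by norm_num)]
    exact_mod_cast this
  have hsne : (s:ℂ) ≠ 0 := by
    intro h
    rw [h, mul_zero] at hs2
    exact hr0 (by linear_combination -hs2/2)
  have htr : (t:ℂ) * r = s := by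
    have : t * (r:ℝ) = s := by
      rw [htdef, hsdef, show (r:ℝ) = Real.sqrt ((r:ℝ)^2) by rw [Real.sqrt_sq hrR.le],
        ← Real.sqrt_mul (by positivity)]
      congr 1
      field_simp
      rw [Real.sq_sqrt (by positivity)]
    exact_mod_cast this
  have htds : (t:ℂ)/(s:ℂ) = 1/(r:ℂ) := by
    rw [div_eq_div_iff hsne hr0]
    linear_combination htr
  -- argument simplifications
  have h1 : -(Real.pi : ℂ) * ap * ε * Complex.I = -((Real.pi:ℂ) * α) := by
    show -(Real.pi : ℂ) * s * (-Complex.I * α / s) * Complex.I = -((Real.pi:ℂ) * α)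
    have e : -(Real.pi : ℂ) * s * (-Complex.I * α / s) * Complex.I
        = (Real.pi:ℂ) * α * ((s:ℂ)/(s:ℂ)) * (Complex.I * Complex.I) := by ring
    rw [e, div_self hsne, Complex.I_mul_I]; ring
  have h2 : (Real.pi : ℂ) * am * ε * Complex.I = -((Real.pi:ℂ) * α / r) := by
    show (Real.pi : ℂ) * (-(t:ℂ)) * (-Complex.I * α / s) * Complex.I = -((Real.pi:ℂ) * α / r)
    have e : (Real.pi : ℂ) * (-(t:ℂ)) * (-Complex.I * α / s) * Complex.I
        = (Real.pi:ℂ) * α * ((t:ℂ)/(s:ℂ)) * (Complex.I * Complex.I) := by ring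
    rw [e, htds, Complex.I_mul_I]; ring
  have hX : 2 * ((β + (r:ℂ) - 1)/(s:ℂ)) - ((s:ℂ) + -(t:ℂ)) = (s:ℂ) * β / (r:ℂ) := by
    field_simp
    linear_combination (-(r:ℂ) - β) * hs2 + (r:ℂ) * hts
  have h3 : (Real.pi : ℂ) * ε * (2 * lam - a0) = -(Real.pi:ℂ) * Complex.I * α * β / r := by
    show (Real.pi : ℂ) * (-Complex.I * α / s) * (2 * ((β + (r : ℂ) - 1) / s) - ((s:ℂ) + -(t:ℂ)))
        = -(Real.pi:ℂ) * Complex.I * α * β / r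
    rw [hX]
    have e : (Real.pi : ℂ) * (-Complex.I * α / s) * ((s:ℂ) * β / (r:ℂ))
        = -(Real.pi:ℂ) * Complex.I * α * β / r * ((s:ℂ)/(s:ℂ)) := by ring
    rw [e, div_self hsne, mul_one]
  constructor
  · rw [h1, h2, h3, Complex.sin_neg, Complex.sin_neg, mul_neg, neg_div_neg_eq]
  · have key : ∀ z : ℂ, Complex.exp (z*Complex.I) - Complex.exp (-z*Complex.I)
        = 2*Complex.I*Complex.sin z := by
      intro z
      rw [Complex.exp_mul_I, show -z*Complex.I = (-z)*Complex.I from rfl, Complex.exp_mul_I,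
        Complex.sin_neg, Complex.cos_neg]
      ring
    have hq1 : qbr r ((r:ℂ)*α) = 2*Complex.I*Complex.sin ((Real.pi:ℂ)*α) := by
      have a1 : (Real.pi:ℂ)*Complex.I*((r:ℂ)*α)/r = ((Real.pi:ℂ)*α)*Complex.I := by
        field_simp
      have a2 : (Real.pi:ℂ)*Complex.I*(-((r:ℂ)*α))/r = -((Real.pi:ℂ)*α)*Complex.I := by
        field_simp
      rw [qbr, qexp, qexp, a1, a2, key]
    have hq2 : qbr r α = 2*Complex.I*Complex.sin ((Real.pi:ℂ)*α/r) := by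
      have a1 : (Real.pi:ℂ)*Complex.I*α/r = ((Real.pi:ℂ)*α/r)*Complex.I := by ring
      have a2 : (Real.pi:ℂ)*Complex.I*(-α)/r = -((Real.pi:ℂ)*α/r)*Complex.I := by ring
      rw [qbr, qexp, qexp, a1, a2, key]
    have h2I : (2:ℂ)*Complex.I ≠ 0 := by
      simp [Complex.I_ne_zero]
    rw [hq1, hq2,
      show Complex.exp (-(Real.pi:ℂ)*Complex.I*α*β/r) * (2*Complex.I*Complex.sin ((Real.pi:ℂ)*α))
        = (2*Complex.I) * (Complex.exp (-(Real.pi:ℂ)*Complex.I*α*β/r)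
          * Complex.sin ((Real.pi:ℂ)*α)) by ring,
      mul_div_mul_left _ _ h2I]
end

section
/- Let α ∈ ℂ with α ∉ rℤ, let k ∈ ℤ and 0 ≤ j ≤ r−2. Set α₋ = −√(2/r) and ε = −iα/√(2r). Then e^{πk√(2r)ε} · sin(π(j+1)α₋εi)/sin(πα₋εi) = e^{−πikα} · {(j+1)α}/{α}. (This identifies the regularized asymptotic dimension of the atypical singlet module M_{1−k, j+1}^ε with the normalized modified trace of the open Hopf link of S_j ⊗ ℂ^H_{kr} on V_α.) -/
lemma qbr_eq_sin (r : ℕ) (z : ℂ) :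
    qbr r z = 2 * Complex.I * Complex.sin ((Real.pi : ℂ) * z / r) := by
  simp only [qbr, qexp, Complex.sin]
  have e1 : (Real.pi : ℂ) * Complex.I * z / r = ((Real.pi : ℂ) * z / r) * Complex.I := by ring
  have e2 : (Real.pi : ℂ) * Complex.I * (-z) / r = -(((Real.pi : ℂ) * z / r) * Complex.I) := by
    ring
  rw [e1, e2, neg_mul]
  linear_combination (Complex.exp (((Real.pi : ℂ) * z / r) * Complex.I)
      - Complex.exp (-(((Real.pi : ℂ) * z / r) * Complex.I))) * Complex.I_mul_I

/-- With `α₋ = −√(2/r)` and `ε = −iα/√(2r)`: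
`e^{πk√(2r)ε} sin(π(j+1)α₋εi)/sin(πα₋εi) = e^{−πikα}{(j+1)α}/{α}`. -/
theorem stmt15 (r : ℕ) (hr : 2 ≤ r) (α : ℂ) (hα : ∀ m : ℤ, α ≠ (r : ℂ) * m)
    (k : ℤ) (j : ℕ) (hj : j ≤ r - 2) :
    let am : ℂ := -(Real.sqrt (2 / r) : ℝ)
    let ε : ℂ := -Complex.I * α / (Real.sqrt (2 * r) : ℝ)
    Complex.exp ((Real.pi : ℂ) * (k : ℂ) * (Real.sqrt (2 * r) : ℝ) * ε)
        * Complex.sin ((Real.pi : ℂ) * ((j : ℂ) + 1) * am * ε * Complex.I)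
        / Complex.sin ((Real.pi : ℂ) * am * ε * Complex.I)
      = Complex.exp (-(Real.pi : ℂ) * Complex.I * (k : ℂ) * α)
        * qbr r (((j : ℂ) + 1) * α) / qbr r α := by
  intro am ε
  have hrR : (0 : ℝ) < (r : ℝ) := by
    have : 0 < r := by omega
    exact_mod_cast this
  have hrC : (r : ℂ) ≠ 0 := by
    exact_mod_cast (by omega : r ≠ 0)
  have hπ : (Real.pi : ℂ) ≠ 0 := Complex.ofReal_ne_zero.2 Real.pi_ne_zero
  have hsR : (0 : ℝ) < Real.sqrt (2 * r) := Real.sqrt_pos.2 (by positivity)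
  have hsC : ((Real.sqrt (2 * r) : ℝ) : ℂ) ≠ 0 := by exact_mod_cast hsR.ne'
  have hsq : ((Real.sqrt (2 * r) : ℝ) : ℂ) * ((Real.sqrt (2 * r) : ℝ) : ℂ) = 2 * r := by
    norm_cast
    rw [Real.mul_self_sqrt (by positivity)]
  have h2 : ((Real.sqrt (2 / r) : ℝ) : ℂ) * ((Real.sqrt (2 * r) : ℝ) : ℂ) = 2 := by
    norm_cast
    rw [← Real.sqrt_mul (by positivity)]
    have h4 : (2 / (r : ℝ)) * (((2 * r : ℕ) : ℝ)) = 4 := by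
      push_cast
      field_simp
      ring
    rw [h4, show (4 : ℝ) = 2 ^ 2 by norm_num, Real.sqrt_sq (by norm_num)]
  have hdiv : ((Real.sqrt (2 / r) : ℝ) : ℂ) = 2 / ((Real.sqrt (2 * r) : ℝ) : ℂ) :=
    (eq_div_iff hsC).2 h2
  have hprod : am * ε = Complex.I * α / r := by
    show (-(Real.sqrt (2 / r) : ℝ) : ℂ) *
        (-Complex.I * α / ((Real.sqrt (2 * r) : ℝ) : ℂ)) = Complex.I * α / r
    rw [neg_mul_comm]
    rw [hdiv]
    have step : (2 / ((Real.sqrt (2 * r) : ℝ) : ℂ)) *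
        -(-Complex.I * α / ((Real.sqrt (2 * r) : ℝ) : ℂ))
        = 2 * (Complex.I * α) /
          (((Real.sqrt (2 * r) : ℝ) : ℂ) * ((Real.sqrt (2 * r) : ℝ) : ℂ)) := by
      field_simp
    rw [step, hsq]
    field_simp
  have key1 : (Real.pi : ℂ) * ((j : ℂ) + 1) * am * ε * Complex.I
      = -((Real.pi : ℂ) * (((j : ℂ) + 1) * α) / r) := by
    have h := hprod
    linear_combination ((Real.pi : ℂ) * ((j : ℂ) + 1) * Complex.I) * h
      + ((Real.pi : ℂ) * ((j : ℂ) + 1) * α / (r : ℂ)) * Complex.I_mul_I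
  have key0 : (Real.pi : ℂ) * am * ε * Complex.I = -((Real.pi : ℂ) * α / r) := by
    linear_combination ((Real.pi : ℂ) * Complex.I) * hprod
      + ((Real.pi : ℂ) * α / (r : ℂ)) * Complex.I_mul_I
  have keyexp : (Real.pi : ℂ) * (k : ℂ) * ((Real.sqrt (2 * r) : ℝ) : ℂ) * ε
      = -(Real.pi : ℂ) * Complex.I * (k : ℂ) * α := by
    show (Real.pi : ℂ) * (k : ℂ) * ((Real.sqrt (2 * r) : ℝ) : ℂ) *
        (-Complex.I * α / ((Real.sqrt (2 * r) : ℝ) : ℂ)) = _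
    have e : (Real.pi : ℂ) * (k : ℂ) * ((Real.sqrt (2 * r) : ℝ) : ℂ) *
        (-Complex.I * α / ((Real.sqrt (2 * r) : ℝ) : ℂ))
        = (Real.pi : ℂ) * (k : ℂ) * (-Complex.I * α) *
          (((Real.sqrt (2 * r) : ℝ) : ℂ) / ((Real.sqrt (2 * r) : ℝ) : ℂ)) := by ring
    rw [e, div_self hsC]
    ring
  have hsin : Complex.sin ((Real.pi : ℂ) * α / r) ≠ 0 := by
    intro h
    rw [Complex.sin_eq_zero_iff] at h
    obtain ⟨n, hn⟩ := h
    apply hα n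
    have h' : (Real.pi : ℂ) * α = (Real.pi : ℂ) * ((r : ℂ) * n) := by
      field_simp at hn
      linear_combination (Real.pi : ℂ) * hn
    exact mul_left_cancel₀ hπ h'
  rw [keyexp, key1, key0, Complex.sin_neg, Complex.sin_neg,
    qbr_eq_sin r (((j : ℂ) + 1) * α), qbr_eq_sin r α]
  field_simp [hsin]
end
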